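/- arXiv:2108.08332 — 11 statements merged into one kernel-verified Lean document; each statement's English description precedes it below -/
import Mathlib

section
/- With 𝒜 = [[A₁, B₁ᵀ, 0],[C₁, -A₂, B₂ᵀ],[0, C₂, A₃]] and the block lower-triangular preconditioner 𝒫₁ = [[A₁,0,0],[C₁,-S₂,0],[0,C₂,S₃]], where S₂ = A₂ + C₁A₁⁻¹B₁ᵀ and S₃ = A₃ + C₂S₂⁻¹B₂ᵀ are invertible, the preconditioned matrix satisfies 𝒫₁⁻¹𝒜 = [[I, A₁⁻¹B₁ᵀ, 0],[0, I, -S₂⁻¹B₂ᵀ],[0,0,I]], and hence (𝒫₁⁻¹𝒜 - I)³ = 0. -/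
open Matrix

/-!
The lower block-triangular preconditioner is the block-LU factor of `𝒜`: multiplying it by the
unit upper block-triangular matrix `U` with off-diagonal blocks `A₁⁻¹ B₁ᵀ` and `-S₂⁻¹ B₂ᵀ`
gives back `𝒜`, the Schur complements `S₂`, `S₃` absorbing the products of the off-diagonal
blocks. Hence `𝒫₁⁻¹ 𝒜 = U`, and `U - 1` is strictly upper block-triangular with three block
rows, so its cube vanishes.
-/

section BlockTriangular

variable {R : Type*} {l m n : Type*} [DecidableEq l] [DecidableEq m] [DecidableEq n]

theorem fromBlocks_unitUpper_sub_one [Ring R] (X : Matrix l m R) (Y : Matrix l n R)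
    (Z : Matrix m n R) :
    (fromBlocks (fromBlocks 1 X 0 1) (fromRows Y Z) 0 1 : Matrix ((l ⊕ m) ⊕ n) ((l ⊕ m) ⊕ n) R)
      - 1 = fromBlocks (fromBlocks 0 X 0 0) (fromRows Y Z) 0 0 := by
  rw [sub_eq_iff_eq_add']
  simp only [← fromBlocks_one, fromBlocks_add, add_zero, zero_add]

variable [Fintype l] [Fintype m] [Fintype n]

theorem fromBlocks_strictUpper_pow_three [Ring R] (X : Matrix l m R) (Y : Matrix l n R)
    (Z : Matrix m n R) :
    (fromBlocks (fromBlocks 0 X 0 0) (fromRows Y Z) 0 0 : Matrix ((l ⊕ m) ⊕ n) ((l ⊕ m) ⊕ n) R)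
      ^ 3 = 0 := by
  simp [pow_succ, fromBlocks_multiply, fromBlocks_mul_fromRows]

theorem isUnit_det_fromBlocks_lowerTriangular [CommRing R] (A₁ : Matrix l l R)
    (S₂ : Matrix m m R) (S₃ : Matrix n n R) (C₁ : Matrix m l R) (C₂ : Matrix n (l ⊕ m) R)
    (hA₁ : IsUnit A₁) (hS₂ : IsUnit S₂) (hS₃ : IsUnit S₃) :
    IsUnit (fromBlocks (fromBlocks A₁ 0 C₁ S₂) 0 C₂ S₃).det := by
  rw [det_fromBlocks_zero₁₂, det_fromBlocks_zero₁₂]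
  exact (((isUnit_iff_isUnit_det _).mp hA₁).mul ((isUnit_iff_isUnit_det _).mp hS₂)).mul
    ((isUnit_iff_isUnit_det _).mp hS₃)

theorem fromBlocks_lowerTriangular_mul_unitUpper [CommRing R]
    (A₁ : Matrix l l R) (A₂ : Matrix m m R) (A₃ : Matrix n n R)
    (B₁ : Matrix l m R) (C₁ : Matrix m l R) (B₂ : Matrix m n R) (C₂ : Matrix n m R)
    (hA₁ : IsUnit A₁) (S₂ : Matrix m m R) (hS₂def : S₂ = A₂ + C₁ * A₁⁻¹ * B₁)
    (hS₂ : IsUnit S₂) (S₃ : Matrix n n R) (hS₃def : S₃ = A₃ + C₂ * S₂⁻¹ * B₂) :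
    fromBlocks (fromBlocks A₁ 0 C₁ (-S₂)) 0 (fromCols 0 C₂) S₃ *
        fromBlocks (fromBlocks 1 (A₁⁻¹ * B₁) 0 1) (fromRows 0 (-(S₂⁻¹ * B₂))) 0 1 =
      fromBlocks (fromBlocks A₁ B₁ C₁ (-A₂)) (fromRows 0 B₂) (fromCols 0 C₂) A₃ := by
  have hA₁inv : A₁ * A₁⁻¹ = 1 := mul_nonsing_inv A₁ ((isUnit_iff_isUnit_det A₁).mp hA₁)
  have hS₂inv : S₂ * S₂⁻¹ = 1 := mul_nonsing_inv S₂ ((isUnit_iff_isUnit_det S₂).mp hS₂)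
  simp only [fromBlocks_multiply, fromBlocks_mul_fromRows, fromCols_mul_fromBlocks,
    fromCols_mul_fromRows, ← Matrix.mul_assoc, hA₁inv, hS₂inv, Matrix.mul_zero, Matrix.zero_mul,
    Matrix.mul_one, Matrix.one_mul, Matrix.mul_neg, Matrix.neg_mul, mul_one, neg_zero, neg_neg,
    add_zero, zero_add, fromBlocks_inj, true_and]
  refine ⟨?_, ?_⟩
  · rw [hS₂def]; abel
  · rw [hS₃def]; abel

end BlockTriangular

theorem stmt_1 {K : Type*} [Field K] {n₁ n₂ n₃ : ℕ}
    (A₁ : Matrix (Fin n₁) (Fin n₁) K) (A₂ : Matrix (Fin n₂) (Fin n₂) K)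
    (A₃ : Matrix (Fin n₃) (Fin n₃) K)
    (B₁ C₁ : Matrix (Fin n₂) (Fin n₁) K) (B₂ C₂ : Matrix (Fin n₃) (Fin n₂) K)
    (hA₁ : IsUnit A₁)
    (S₂ : Matrix (Fin n₂) (Fin n₂) K) (hS₂def : S₂ = A₂ + C₁ * A₁⁻¹ * B₁ᵀ)
    (hS₂ : IsUnit S₂)
    (S₃ : Matrix (Fin n₃) (Fin n₃) K) (hS₃def : S₃ = A₃ + C₂ * S₂⁻¹ * B₂ᵀ)
    (hS₃ : IsUnit S₃)
    (𝒜 : Matrix ((Fin n₁ ⊕ Fin n₂) ⊕ Fin n₃) ((Fin n₁ ⊕ Fin n₂) ⊕ Fin n₃) K)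
    (h𝒜 : 𝒜 = fromBlocks (fromBlocks A₁ B₁ᵀ C₁ (-A₂)) (fromRows 0 B₂ᵀ)
      (fromCols 0 C₂) A₃)
    (P : Matrix ((Fin n₁ ⊕ Fin n₂) ⊕ Fin n₃) ((Fin n₁ ⊕ Fin n₂) ⊕ Fin n₃) K)
    (hP : P = fromBlocks (fromBlocks A₁ 0 C₁ (-S₂)) 0 (fromCols 0 C₂) S₃) :
    P⁻¹ * 𝒜 = fromBlocks (fromBlocks 1 (A₁⁻¹ * B₁ᵀ) 0 1) (fromRows 0 (-(S₂⁻¹ * B₂ᵀ))) 0 1 ∧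
      (P⁻¹ * 𝒜 - 1) ^ 3 = 0 := by
  have hdetP : IsUnit P.det := hP ▸
    isUnit_det_fromBlocks_lowerTriangular A₁ (-S₂) S₃ C₁ (fromCols 0 C₂) hA₁ hS₂.neg hS₃
  have hfactor := fromBlocks_lowerTriangular_mul_unitUpper A₁ A₂ A₃ B₁ᵀ C₁ B₂ᵀ C₂ hA₁ S₂
    hS₂def hS₂ S₃ hS₃def
  have hprecond : P⁻¹ * 𝒜 =
      fromBlocks (fromBlocks 1 (A₁⁻¹ * B₁ᵀ) 0 1) (fromRows 0 (-(S₂⁻¹ * B₂ᵀ))) 0 1 := by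
    rw [h𝒜, ← hfactor, ← hP, nonsing_inv_mul_cancel_left _ _ hdetP]
  refine ⟨hprecond, ?_⟩
  rw [hprecond, fromBlocks_unitUpper_sub_one, fromBlocks_strictUpper_pow_three]
end

section
/- With 𝒜 = [[A₁, B₁ᵀ, 0],[C₁, -A₂, B₂ᵀ],[0, C₂, A₃]] and the preconditioner 𝒫₂ = [[A₁,0,0],[C₁,S₂,0],[0,-C₂,S₃]], where S₂ = A₂ + C₁A₁⁻¹B₁ᵀ and S₃ = A₃ + C₂S₂⁻¹B₂ᵀ are invertible, the preconditioned matrix 𝒯 = 𝒫₂⁻¹𝒜 satisfies (𝒯 - I)²(𝒯 + I) = 0. -/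
open Matrix

/-!
Block forward substitution factors `𝒜 = 𝒫₂ 𝒯` with
`𝒯 = [[I, A₁⁻¹B₁ᵀ, 0], [0, -I, S₂⁻¹B₂ᵀ], [0, 0, I]]`; the Schur complements `S₂`, `S₃` are exactly
what makes the diagonal blocks of `𝒫₂ 𝒯` come out as `-A₂` and `A₃`. Then `𝒯² = I + N` with `N`
supported in the top-right block, and `𝒯 N = N`, so `(𝒯 - I)²(𝒯 + I) = (𝒯 - I)(𝒯² - I) = 0`.
-/

lemma Matrix.fromRows_add {R m₁ m₂ n : Type*} [Add R] (A₁ B₁ : Matrix m₁ n R)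
    (A₂ B₂ : Matrix m₂ n R) :
    fromRows A₁ A₂ + fromRows B₁ B₂ = fromRows (A₁ + B₁) (A₂ + B₂) := by
  ext (_ | _) _ <;> rfl

section

variable {R m₁ m₂ m₃ : Type*} [DecidableEq m₁] [DecidableEq m₂] [DecidableEq m₃]

def signedBlockBidiagonal [Ring R] (X : Matrix m₁ m₂ R) (Y : Matrix m₂ m₃ R) :
    Matrix ((m₁ ⊕ m₂) ⊕ m₃) ((m₁ ⊕ m₂) ⊕ m₃) R :=
  fromBlocks (fromBlocks 1 X 0 (-1)) (fromRows 0 Y) 0 1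

variable [Fintype m₁] [Fintype m₂] [Fintype m₃]

section Ring

variable [Ring R]

lemma signedBlockBidiagonal_mul_self (X : Matrix m₁ m₂ R) (Y : Matrix m₂ m₃ R) :
    signedBlockBidiagonal X Y * signedBlockBidiagonal X Y =
      1 + fromBlocks 0 (fromRows (X * Y) 0) 0 0 := by
  simp [signedBlockBidiagonal, fromBlocks_multiply, fromBlocks_mul_fromRows, ← fromBlocks_one,
    fromBlocks_add, fromRows_add]

lemma signedBlockBidiagonal_mul_corner (X : Matrix m₁ m₂ R) (Y : Matrix m₂ m₃ R)
    (Z : Matrix m₁ m₃ R) :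
    signedBlockBidiagonal X Y * fromBlocks 0 (fromRows Z 0) 0 0 =
      fromBlocks 0 (fromRows Z 0) 0 0 := by
  simp [signedBlockBidiagonal, fromBlocks_multiply, fromBlocks_mul_fromRows]

theorem signedBlockBidiagonal_sub_one_sq_mul_add_one (X : Matrix m₁ m₂ R)
    (Y : Matrix m₂ m₃ R) :
    (signedBlockBidiagonal X Y - 1) ^ 2 * (signedBlockBidiagonal X Y + 1) = 0 := by
  set T := signedBlockBidiagonal X Y
  have h : (T - 1) ^ 2 * (T + 1) = T * (T * T - 1) - (T * T - 1) := by noncomm_ring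
  rw [h, signedBlockBidiagonal_mul_self, add_sub_cancel_left, signedBlockBidiagonal_mul_corner,
    sub_self]

end Ring

lemma fromBlocks_lower_mul_signedBlockBidiagonal [CommRing R] {A₁ : Matrix m₁ m₁ R}
    {S₂ : Matrix m₂ m₂ R} (hA₁ : IsUnit A₁) (hS₂ : IsUnit S₂) (S₃ : Matrix m₃ m₃ R)
    (B₁ : Matrix m₁ m₂ R) (C₁ : Matrix m₂ m₁ R) (B₂ : Matrix m₂ m₃ R) (C₂ : Matrix m₃ m₂ R) :
    fromBlocks (fromBlocks A₁ 0 C₁ S₂) 0 (fromCols 0 (-C₂)) S₃ *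
        signedBlockBidiagonal (A₁⁻¹ * B₁) (S₂⁻¹ * B₂) =
      fromBlocks (fromBlocks A₁ B₁ C₁ (C₁ * A₁⁻¹ * B₁ - S₂)) (fromRows 0 B₂)
        (fromCols 0 C₂) (S₃ - C₂ * S₂⁻¹ * B₂) := by
  rw [isUnit_iff_isUnit_det] at hA₁ hS₂
  simp [signedBlockBidiagonal, fromBlocks_multiply, fromBlocks_mul_fromRows,
    fromCols_mul_fromBlocks, fromCols_mul_fromRows, ← Matrix.mul_assoc, mul_nonsing_inv _ hA₁,
    mul_nonsing_inv _ hS₂, sub_eq_add_neg, add_comm]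

end

theorem stmt_2 {K : Type*} [Field K] {n₁ n₂ n₃ : ℕ}
    (A₁ : Matrix (Fin n₁) (Fin n₁) K) (A₂ : Matrix (Fin n₂) (Fin n₂) K)
    (A₃ : Matrix (Fin n₃) (Fin n₃) K)
    (B₁ C₁ : Matrix (Fin n₂) (Fin n₁) K) (B₂ C₂ : Matrix (Fin n₃) (Fin n₂) K)
    (hA₁ : IsUnit A₁)
    (S₂ : Matrix (Fin n₂) (Fin n₂) K) (hS₂def : S₂ = A₂ + C₁ * A₁⁻¹ * B₁ᵀ)
    (hS₂ : IsUnit S₂)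
    (S₃ : Matrix (Fin n₃) (Fin n₃) K) (hS₃def : S₃ = A₃ + C₂ * S₂⁻¹ * B₂ᵀ)
    (hS₃ : IsUnit S₃)
    (𝒜 : Matrix ((Fin n₁ ⊕ Fin n₂) ⊕ Fin n₃) ((Fin n₁ ⊕ Fin n₂) ⊕ Fin n₃) K)
    (h𝒜 : 𝒜 = fromBlocks (fromBlocks A₁ B₁ᵀ C₁ (-A₂)) (fromRows 0 B₂ᵀ)
      (fromCols 0 C₂) A₃)
    (P : Matrix ((Fin n₁ ⊕ Fin n₂) ⊕ Fin n₃) ((Fin n₁ ⊕ Fin n₂) ⊕ Fin n₃) K)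
    (hP : P = fromBlocks (fromBlocks A₁ 0 C₁ S₂) 0 (fromCols 0 (-C₂)) S₃) :
    (P⁻¹ * 𝒜 - 1) ^ 2 * (P⁻¹ * 𝒜 + 1) = 0 := by
  have hP_unit : IsUnit P := by
    rw [hP, isUnit_fromBlocks_zero₁₂, isUnit_fromBlocks_zero₁₂]
    exact ⟨⟨hA₁, hS₂⟩, hS₃⟩
  have h𝒜_factor : 𝒜 = P * signedBlockBidiagonal (A₁⁻¹ * B₁ᵀ) (S₂⁻¹ * B₂ᵀ) := by
    have hA₂ : -A₂ = C₁ * A₁⁻¹ * B₁ᵀ - S₂ := by rw [hS₂def]; abel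
    have hA₃ : A₃ = S₃ - C₂ * S₂⁻¹ * B₂ᵀ := by rw [hS₃def]; abel
    rw [h𝒜, hA₂, hA₃, hP, fromBlocks_lower_mul_signedBlockBidiagonal hA₁ hS₂]
  rw [h𝒜_factor, nonsing_inv_mul_cancel_left _ _ ((isUnit_iff_isUnit_det P).mp hP_unit)]
  exact signedBlockBidiagonal_sub_one_sq_mul_add_one _ _
end

section
/- With 𝒜 = [[A₁, B₁ᵀ, 0],[C₁, -A₂, B₂ᵀ],[0, C₂, A₃]] and the preconditioner 𝒫₃ = [[A₁,0,0],[C₁,S₂,0],[0,-C₂,-S₃]], where S₂ = A₂ + C₁A₁⁻¹B₁ᵀ and S₃ = A₃ + C₂S₂⁻¹B₂ᵀ are invertible, the preconditioned matrix 𝒯 = 𝒫₃⁻¹𝒜 satisfies (𝒯 - I)(𝒯 + I)² = 0. -/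
/-!
The lower block-triangular preconditioner is the `L` of a block `LU`-factorisation
`𝒜 = 𝒫₃ 𝒯` whose upper factor is
`𝒯 = [[I, A₁⁻¹B₁ᵀ, 0], [0, -I, S₂⁻¹B₂ᵀ], [0, 0, -I]]`,
the Schur complements `S₂`, `S₃` being exactly what makes the off-diagonal blocks match.
The leading `2 × 2` block `U` of `𝒯` is an involution, so `(U - I)(U + I) = 0`; since the last
block row of `𝒯 + I` vanishes, one more factor `𝒯 + I` kills the remaining block column.
-/

open Matrix

namespace Matrix

variable {R : Type*} [Ring R] {m n : Type*} [Fintype m] [Fintype n] [DecidableEq m] [DecidableEq n]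

theorem fromBlocks_one_neg_one_mul_self (X : Matrix m n R) :
    fromBlocks 1 X 0 (-1 : Matrix n n R) * fromBlocks 1 X 0 (-1 : Matrix n n R) =
      (1 : Matrix (m ⊕ n) (m ⊕ n) R) := by
  simp [fromBlocks_multiply, fromBlocks_one]

theorem fromBlocks_neg_one_sub_one_mul_add_one_sq_eq_zero {U : Matrix m m R} (V : Matrix m n R)
    (hU : U * U = 1) :
    (fromBlocks U V 0 (-1 : Matrix n n R) - 1) * (fromBlocks U V 0 (-1) + 1) ^ 2 = 0 := by
  have hU' : (U - 1) * (U + 1) = 0 := by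
    simp only [sub_mul, mul_add, hU, mul_one, one_mul]; abel
  have hsub : fromBlocks U V 0 (-1 : Matrix n n R) - 1 = fromBlocks (U - 1) V 0 (-2) := by
    rw [← fromBlocks_one, sub_eq_add_neg, fromBlocks_neg, fromBlocks_add]; norm_num [sub_eq_add_neg]
  have hadd : fromBlocks U V 0 (-1 : Matrix n n R) + 1 = fromBlocks (U + 1) V 0 0 := by
    rw [← fromBlocks_one, fromBlocks_add]; simp
  rw [sq, ← mul_assoc, hsub, hadd, fromBlocks_multiply, hU']
  simp [fromBlocks_multiply]

theorem fromBlocks_eq_lowerTriangular_mul_upperTriangular {m₁ m₂ m₃ : Type*} [Fintype m₁]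
    [Fintype m₂] [Fintype m₃] [DecidableEq m₁] [DecidableEq m₂] [DecidableEq m₃]
    {A₁ : Matrix m₁ m₁ R} {A₂ S₂ : Matrix m₂ m₂ R} {A₃ S₃ : Matrix m₃ m₃ R}
    {E₁ X : Matrix m₁ m₂ R} {C₁ : Matrix m₂ m₁ R} {E₂ Y : Matrix m₂ m₃ R} {C₂ : Matrix m₃ m₂ R}
    (hX : A₁ * X = E₁) (hY : S₂ * Y = E₂) (hS₂ : S₂ = A₂ + C₁ * X) (hS₃ : S₃ = A₃ + C₂ * Y) :
    fromBlocks (fromBlocks A₁ E₁ C₁ (-A₂)) (fromRows 0 E₂) (fromCols 0 C₂) A₃ =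
      fromBlocks (fromBlocks A₁ 0 C₁ S₂) 0 (fromCols 0 (-C₂)) (-S₃) *
        fromBlocks (fromBlocks 1 X 0 (-1)) (fromRows 0 Y) 0 (-1) := by
  subst hX hY hS₂ hS₃
  simp only [fromBlocks_multiply, fromBlocks_mul_fromRows, fromCols_mul_fromBlocks,
    fromCols_mul_fromRows, Matrix.mul_one, Matrix.mul_zero, Matrix.zero_mul, Matrix.mul_neg,
    Matrix.neg_mul, add_zero, zero_add, neg_zero, neg_neg]
  congr 2 <;> abel

end Matrix

theorem stmt_3 {K : Type*} [Field K] {n₁ n₂ n₃ : ℕ}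
    (A₁ : Matrix (Fin n₁) (Fin n₁) K) (A₂ : Matrix (Fin n₂) (Fin n₂) K)
    (A₃ : Matrix (Fin n₃) (Fin n₃) K)
    (B₁ C₁ : Matrix (Fin n₂) (Fin n₁) K) (B₂ C₂ : Matrix (Fin n₃) (Fin n₂) K)
    (hA₁ : IsUnit A₁)
    (S₂ : Matrix (Fin n₂) (Fin n₂) K) (hS₂def : S₂ = A₂ + C₁ * A₁⁻¹ * B₁ᵀ)
    (hS₂ : IsUnit S₂)
    (S₃ : Matrix (Fin n₃) (Fin n₃) K) (hS₃def : S₃ = A₃ + C₂ * S₂⁻¹ * B₂ᵀ)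
    (hS₃ : IsUnit S₃)
    (𝒜 : Matrix ((Fin n₁ ⊕ Fin n₂) ⊕ Fin n₃) ((Fin n₁ ⊕ Fin n₂) ⊕ Fin n₃) K)
    (h𝒜 : 𝒜 = fromBlocks (fromBlocks A₁ B₁ᵀ C₁ (-A₂)) (fromRows 0 B₂ᵀ)
      (fromCols 0 C₂) A₃)
    (P : Matrix ((Fin n₁ ⊕ Fin n₂) ⊕ Fin n₃) ((Fin n₁ ⊕ Fin n₂) ⊕ Fin n₃) K)
    (hP : P = fromBlocks (fromBlocks A₁ 0 C₁ S₂) 0 (fromCols 0 (-C₂)) (-S₃)) :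
    (P⁻¹ * 𝒜 - 1) * (P⁻¹ * 𝒜 + 1) ^ 2 = 0 := by
  have hA₁det := (isUnit_iff_isUnit_det A₁).mp hA₁
  have hS₂det := (isUnit_iff_isUnit_det S₂).mp hS₂
  have hPdet : IsUnit P.det := by
    rw [← isUnit_iff_isUnit_det, hP]
    simp [hA₁, hS₂, hS₃]
  have hS₂' : S₂ = A₂ + C₁ * (A₁⁻¹ * B₁ᵀ) := by rw [hS₂def, Matrix.mul_assoc]
  have hS₃' : S₃ = A₃ + C₂ * (S₂⁻¹ * B₂ᵀ) := by rw [hS₃def, Matrix.mul_assoc]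
  rw [h𝒜, fromBlocks_eq_lowerTriangular_mul_upperTriangular
      (mul_nonsing_inv_cancel_left A₁ B₁ᵀ hA₁det) (mul_nonsing_inv_cancel_left S₂ B₂ᵀ hS₂det)
      hS₂' hS₃', ← hP, nonsing_inv_mul_cancel_left _ _ hPdet]
  exact fromBlocks_neg_one_sub_one_mul_add_one_sq_eq_zero _ (fromBlocks_one_neg_one_mul_self _)
end

section
/- Let A₂ = 0 and A₃ = 0, so that S₂ = C₁A₁⁻¹B₁ᵀ and S₃ = C₂S₂⁻¹B₂ᵀ, and assume A₁, S₂, S₃ are invertible. With block-diagonal preconditioner 𝒫_D = diag(A₁, S₂, S₃) applied to 𝒜 = [[A₁, B₁ᵀ, 0],[C₁, 0, B₂ᵀ],[0, C₂, 0]], the matrix 𝒯 = 𝒫_D⁻¹𝒜 satisfies the polynomial identity (𝒯 - I)(𝒯² - 𝒯 - I)(𝒯³ - 𝒯² - 2𝒯 + I) = 0. -/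
/-!
Write `𝒯 = 𝒫_D⁻¹ 𝒜 = [[I, X, 0], [Y, 0, Z], [0, W, 0]]` with `X = A₁⁻¹B₁ᵀ`, `Y = S₂⁻¹C₁`,
`Z = S₂⁻¹B₂ᵀ`, `W = S₃⁻¹C₂`. The definitions of the Schur complements say exactly that
`Y X = I` and `W Z = I`, and these two relations alone make the block entries of
`(𝒯 - I)(𝒯² - 𝒯 - I)(𝒯³ - 𝒯² - 2𝒯 + I)` vanish. The three factors are the characteristic
polynomials of `[1]`, `[[1, 1], [1, 0]]` and `[[1, 1, 0], [1, 0, 1], [0, 1, 0]]`, the shapes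
that `𝒯` takes on `ker Y ⊕ 0 ⊕ 0`, on `X (ker W) ⊕ ker W ⊕ 0` and on `XZV₃ ⊕ ZV₃ ⊕ V₃`.
-/

open Matrix

namespace Matrix

variable {R : Type*} {l m n l' m' n' l'' m'' n'' : Type*}

def fromBlocks₃ (a₁₁ : Matrix l l' R) (a₁₂ : Matrix l m' R) (a₁₃ : Matrix l n' R)
    (a₂₁ : Matrix m l' R) (a₂₂ : Matrix m m' R) (a₂₃ : Matrix m n' R)
    (a₃₁ : Matrix n l' R) (a₃₂ : Matrix n m' R) (a₃₃ : Matrix n n' R) :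
    Matrix ((l ⊕ m) ⊕ n) ((l' ⊕ m') ⊕ n') R :=
  fromBlocks (fromBlocks a₁₁ a₁₂ a₂₁ a₂₂) (fromRows a₁₃ a₂₃) (fromCols a₃₁ a₃₂) a₃₃

section Basic

variable (a₁₁ : Matrix l l' R) (a₁₂ : Matrix l m' R) (a₁₃ : Matrix l n' R)
  (a₂₁ : Matrix m l' R) (a₂₂ : Matrix m m' R) (a₂₃ : Matrix m n' R)
  (a₃₁ : Matrix n l' R) (a₃₂ : Matrix n m' R) (a₃₃ : Matrix n n' R)
  (b₁₁ : Matrix l l' R) (b₁₂ : Matrix l m' R) (b₁₃ : Matrix l n' R)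
  (b₂₁ : Matrix m l' R) (b₂₂ : Matrix m m' R) (b₂₃ : Matrix m n' R)
  (b₃₁ : Matrix n l' R) (b₃₂ : Matrix n m' R) (b₃₃ : Matrix n n' R)

theorem fromBlocks₃_zero [Zero R] :
    fromBlocks₃ (0 : Matrix l l' R) (0 : Matrix l m' R) (0 : Matrix l n' R)
      (0 : Matrix m l' R) 0 0 (0 : Matrix n l' R) 0 0 = 0 := by
  ext ((i | i) | i) ((j | j) | j) <;> rfl

theorem fromBlocks₃_one [Zero R] [One R] [DecidableEq l] [DecidableEq m] [DecidableEq n] :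
    fromBlocks₃ (1 : Matrix l l R) 0 0 0 (1 : Matrix m m R) 0 0 0 (1 : Matrix n n R) = 1 := by
  ext ((i | i) | i) ((j | j) | j) <;> simp [fromBlocks₃, one_apply]

theorem fromBlocks₃_add [Add R] :
    fromBlocks₃ a₁₁ a₁₂ a₁₃ a₂₁ a₂₂ a₂₃ a₃₁ a₃₂ a₃₃ + fromBlocks₃ b₁₁ b₁₂ b₁₃ b₂₁ b₂₂ b₂₃ b₃₁ b₃₂ b₃₃
      = fromBlocks₃ (a₁₁ + b₁₁) (a₁₂ + b₁₂) (a₁₃ + b₁₃) (a₂₁ + b₂₁) (a₂₂ + b₂₂) (a₂₃ + b₂₃)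
          (a₃₁ + b₃₁) (a₃₂ + b₃₂) (a₃₃ + b₃₃) := by
  ext ((i | i) | i) ((j | j) | j) <;> rfl

theorem fromBlocks₃_sub [Sub R] :
    fromBlocks₃ a₁₁ a₁₂ a₁₃ a₂₁ a₂₂ a₂₃ a₃₁ a₃₂ a₃₃ - fromBlocks₃ b₁₁ b₁₂ b₁₃ b₂₁ b₂₂ b₂₃ b₃₁ b₃₂ b₃₃
      = fromBlocks₃ (a₁₁ - b₁₁) (a₁₂ - b₁₂) (a₁₃ - b₁₃) (a₂₁ - b₂₁) (a₂₂ - b₂₂) (a₂₃ - b₂₃)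
          (a₃₁ - b₃₁) (a₃₂ - b₃₂) (a₃₃ - b₃₃) := by
  ext ((i | i) | i) ((j | j) | j) <;> rfl

theorem fromBlocks₃_smul {S : Type*} [SMul S R] (s : S) :
    s • fromBlocks₃ a₁₁ a₁₂ a₁₃ a₂₁ a₂₂ a₂₃ a₃₁ a₃₂ a₃₃
      = fromBlocks₃ (s • a₁₁) (s • a₁₂) (s • a₁₃) (s • a₂₁) (s • a₂₂) (s • a₂₃)
          (s • a₃₁) (s • a₃₂) (s • a₃₃) := by
  ext ((i | i) | i) ((j | j) | j) <;> rfl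

end Basic

theorem fromBlocks₃_mul [NonUnitalNonAssocSemiring R] [Fintype l'] [Fintype m'] [Fintype n']
    (a₁₁ : Matrix l l' R) (a₁₂ : Matrix l m' R) (a₁₃ : Matrix l n' R)
    (a₂₁ : Matrix m l' R) (a₂₂ : Matrix m m' R) (a₂₃ : Matrix m n' R)
    (a₃₁ : Matrix n l' R) (a₃₂ : Matrix n m' R) (a₃₃ : Matrix n n' R)
    (b₁₁ : Matrix l' l'' R) (b₁₂ : Matrix l' m'' R) (b₁₃ : Matrix l' n'' R)
    (b₂₁ : Matrix m' l'' R) (b₂₂ : Matrix m' m'' R) (b₂₃ : Matrix m' n'' R)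
    (b₃₁ : Matrix n' l'' R) (b₃₂ : Matrix n' m'' R) (b₃₃ : Matrix n' n'' R) :
    fromBlocks₃ a₁₁ a₁₂ a₁₃ a₂₁ a₂₂ a₂₃ a₃₁ a₃₂ a₃₃ * fromBlocks₃ b₁₁ b₁₂ b₁₃ b₂₁ b₂₂ b₂₃ b₃₁ b₃₂ b₃₃
      = fromBlocks₃
          (a₁₁ * b₁₁ + a₁₂ * b₂₁ + a₁₃ * b₃₁) (a₁₁ * b₁₂ + a₁₂ * b₂₂ + a₁₃ * b₃₂)
          (a₁₁ * b₁₃ + a₁₂ * b₂₃ + a₁₃ * b₃₃)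
          (a₂₁ * b₁₁ + a₂₂ * b₂₁ + a₂₃ * b₃₁) (a₂₁ * b₁₂ + a₂₂ * b₂₂ + a₂₃ * b₃₂)
          (a₂₁ * b₁₃ + a₂₂ * b₂₃ + a₂₃ * b₃₃)
          (a₃₁ * b₁₁ + a₃₂ * b₂₁ + a₃₃ * b₃₁) (a₃₁ * b₁₂ + a₃₂ * b₂₂ + a₃₃ * b₃₂)
          (a₃₁ * b₁₃ + a₃₂ * b₂₃ + a₃₃ * b₃₃) := by
  ext ((i | i) | i) ((j | j) | j) <;>
    simp [fromBlocks₃, mul_apply, Fintype.sum_sum_type, add_apply, add_assoc]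

theorem mul_mul_cancel_left_of_mul_eq_one [Semiring R] [Fintype l] [Fintype m] [DecidableEq m]
    {A : Matrix m l R} {B : Matrix l m R} (h : A * B = 1) (M : Matrix m n R) : A * (B * M) = M := by
  rw [← Matrix.mul_assoc, h, Matrix.one_mul]

section Preconditioned

variable [Ring R] [DecidableEq l] [DecidableEq m] [DecidableEq n]
  {X : Matrix l m R} {Y : Matrix m l R} {Z : Matrix m n R} {W : Matrix n m R}

theorem fromBlocks₃_sub_one :
    fromBlocks₃ 1 X 0 Y 0 Z 0 W 0 - 1 = fromBlocks₃ 0 X 0 Y (-1) Z 0 W (-1) := by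
  rw [← fromBlocks₃_one, fromBlocks₃_sub]
  simp

variable [Fintype l] [Fintype m] [Fintype n]

theorem fromBlocks₃_sq_sub_self_sub_one (hYX : Y * X = 1) (hWZ : W * Z = 1) :
    fromBlocks₃ 1 X 0 Y 0 Z 0 W 0 ^ 2 - fromBlocks₃ 1 X 0 Y 0 Z 0 W 0 - 1
      = fromBlocks₃ (X * Y - 1) 0 (X * Z) 0 (Z * W) (-Z) (W * Y) (-W) 0 := by
  rw [sq, fromBlocks₃_mul, ← fromBlocks₃_one, fromBlocks₃_sub, fromBlocks₃_sub]
  congr 1 <;> simp [hYX, hWZ]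

theorem fromBlocks₃_cube_sub (hYX : Y * X = 1) (hWZ : W * Z = 1) :
    fromBlocks₃ 1 X 0 Y 0 Z 0 W 0 ^ 3 - fromBlocks₃ 1 X 0 Y 0 Z 0 W 0 ^ 2
        - 2 • fromBlocks₃ 1 X 0 Y 0 Z 0 W 0 + 1
      = fromBlocks₃ (X * Y - 1) (X * Z * W - X) 0 (Z * W * Y - Y) (1 - Z * W) 0 0 0 0 := by
  rw [pow_succ, sq, two_smul, fromBlocks₃_mul, fromBlocks₃_mul, ← fromBlocks₃_one,
    fromBlocks₃_add, fromBlocks₃_sub, fromBlocks₃_sub, fromBlocks₃_add]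
  congr 1 <;> simp [Matrix.add_mul, Matrix.mul_assoc, hYX, hWZ] <;> abel

theorem fromBlocks₃_factors_mul_eq_zero (hYX : Y * X = 1) (hWZ : W * Z = 1) :
    (fromBlocks₃ 1 X 0 Y 0 Z 0 W 0 - 1)
        * (fromBlocks₃ 1 X 0 Y 0 Z 0 W 0 ^ 2 - fromBlocks₃ 1 X 0 Y 0 Z 0 W 0 - 1)
        * (fromBlocks₃ 1 X 0 Y 0 Z 0 W 0 ^ 3 - fromBlocks₃ 1 X 0 Y 0 Z 0 W 0 ^ 2
          - 2 • fromBlocks₃ 1 X 0 Y 0 Z 0 W 0 + 1) = 0 := by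
  rw [fromBlocks₃_sub_one, fromBlocks₃_sq_sub_self_sub_one hYX hWZ,
    fromBlocks₃_cube_sub hYX hWZ, fromBlocks₃_mul, fromBlocks₃_mul, ← fromBlocks₃_zero]
  congr 1 <;>
    simp [Matrix.mul_sub, Matrix.add_mul, Matrix.mul_assoc,
      mul_mul_cancel_left_of_mul_eq_one hYX, mul_mul_cancel_left_of_mul_eq_one hWZ, hYX, hWZ]

end Preconditioned

end Matrix

theorem stmt_4 {n₁ n₂ n₃ : ℕ}
    (A₁ : Matrix (Fin n₁) (Fin n₁) ℝ)
    (B₁ C₁ : Matrix (Fin n₂) (Fin n₁) ℝ) (B₂ C₂ : Matrix (Fin n₃) (Fin n₂) ℝ)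
    (hA₁ : IsUnit A₁)
    (S₂ : Matrix (Fin n₂) (Fin n₂) ℝ) (hS₂def : S₂ = C₁ * A₁⁻¹ * B₁ᵀ)
    (hS₂ : IsUnit S₂)
    (S₃ : Matrix (Fin n₃) (Fin n₃) ℝ) (hS₃def : S₃ = C₂ * S₂⁻¹ * B₂ᵀ)
    (hS₃ : IsUnit S₃)
    (𝒜 : Matrix ((Fin n₁ ⊕ Fin n₂) ⊕ Fin n₃) ((Fin n₁ ⊕ Fin n₂) ⊕ Fin n₃) ℝ)
    (h𝒜 : 𝒜 = fromBlocks (fromBlocks A₁ B₁ᵀ C₁ 0) (fromRows 0 B₂ᵀ)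
      (fromCols 0 C₂) 0)
    (T : Matrix ((Fin n₁ ⊕ Fin n₂) ⊕ Fin n₃) ((Fin n₁ ⊕ Fin n₂) ⊕ Fin n₃) ℝ)
    (hT : T = (fromBlocks (fromBlocks A₁ 0 0 S₂) 0 0 S₃)⁻¹ * 𝒜) :
    (T - 1) * (T ^ 2 - T - 1) * (T ^ 3 - T ^ 2 - 2 • T + 1) = 0 := by
  rw [isUnit_iff_isUnit_det] at hA₁ hS₂ hS₃
  have hD : fromBlocks (fromBlocks A₁ 0 0 S₂) 0 0 S₃ = fromBlocks₃ A₁ 0 0 0 S₂ 0 0 0 S₃ := by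
    simp [fromBlocks₃]
  have hDdet : IsUnit (fromBlocks₃ A₁ 0 0 0 S₂ 0 0 0 S₃).det := by
    rw [← hD, det_fromBlocks_zero₂₁, det_fromBlocks_zero₂₁]
    exact (hA₁.mul hS₂).mul hS₃
  have h𝒜_factor : 𝒜 = fromBlocks₃ A₁ 0 0 0 S₂ 0 0 0 S₃
      * fromBlocks₃ 1 (A₁⁻¹ * B₁ᵀ) 0 (S₂⁻¹ * C₁) 0 (S₂⁻¹ * B₂ᵀ) 0 (S₃⁻¹ * C₂) 0 := by
    rw [h𝒜, fromBlocks₃_mul]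
    change fromBlocks₃ A₁ B₁ᵀ 0 C₁ 0 B₂ᵀ 0 C₂ 0 = _
    congr 1 <;> simp [mul_nonsing_inv_cancel_left _ _ hA₁, mul_nonsing_inv_cancel_left _ _ hS₂,
      mul_nonsing_inv_cancel_left _ _ hS₃]
  have hYX : S₂⁻¹ * C₁ * (A₁⁻¹ * B₁ᵀ) = 1 := by
    rw [Matrix.mul_assoc, ← Matrix.mul_assoc C₁, ← hS₂def, nonsing_inv_mul _ hS₂]
  have hWZ : S₃⁻¹ * C₂ * (S₂⁻¹ * B₂ᵀ) = 1 := by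
    rw [Matrix.mul_assoc, ← Matrix.mul_assoc C₂, ← hS₃def, nonsing_inv_mul _ hS₃]
  rw [hT, hD, h𝒜_factor, nonsing_inv_mul_cancel_left _ _ hDdet]
  exact fromBlocks₃_factors_mul_eq_zero hYX hWZ
end

section
/- Under the same hypotheses (A₂ = A₃ = 0, A₁, S₂ = C₁A₁⁻¹B₁ᵀ, S₃ = C₂S₂⁻¹B₂ᵀ invertible), the preconditioned matrix 𝒯₃ = diag(A₁, -S₂, S₃)⁻¹ 𝒜 = [[I, A₁⁻¹B₁ᵀ, 0],[-S₂⁻¹C₁, 0, -S₂⁻¹B₂ᵀ],[0, S₃⁻¹C₂, 0]] satisfies (𝒯₃ - I)(𝒯₃² - 𝒯₃ + I)(𝒯₃³ - 𝒯₃² + 2𝒯₃ - I) = 0. -/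
/-!
Writing `D = diag(A₁, -S₂, S₃)`, the preconditioned matrix is
`𝒯₃ = [[1, X, 0], [Y, 0, Z], [0, W, 0]]` with `X = A₁⁻¹B₁ᵀ`, `Y = -S₂⁻¹C₁`, `Z = -S₂⁻¹B₂ᵀ`,
`W = S₃⁻¹C₂`, and the definitions of the Schur complements say exactly `YX = -1` and `WZ = -1`.
Expanding the degree-six polynomial blockwise, every word in `X, Y, Z, W` that appears collapses
under these two relations, and the coefficients cancel.
-/

open Matrix

namespace Matrix

variable {R m₁ m₂ m₃ : Type*}

section Ring

variable [Ring R] [Fintype m₁] [Fintype m₂] [Fintype m₃] [DecidableEq m₂]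

lemma mul_mul_cancel_of_mul_eq_neg_one {n : Type*} {Y : Matrix m₂ m₁ R} {X : Matrix m₁ m₂ R}
    (h : Y * X = -1) (M : Matrix m₂ n R) : Y * (X * M) = -M := by
  rw [← Matrix.mul_assoc, h, Matrix.neg_mul, Matrix.one_mul]

variable [DecidableEq m₁] [DecidableEq m₃]

theorem sextic_annihilates_fromBlocks_of_mul_eq_neg_one (X : Matrix m₁ m₂ R)
    (Y : Matrix m₂ m₁ R) (Z : Matrix m₂ m₃ R) (W : Matrix m₃ m₂ R)
    (hYX : Y * X = -1) (hWZ : W * Z = -1) (T : Matrix ((m₁ ⊕ m₂) ⊕ m₃) ((m₁ ⊕ m₂) ⊕ m₃) R)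
    (hT : T = fromBlocks (fromBlocks 1 X Y 0) (fromRows 0 Z) (fromCols 0 W) 0) :
    (T - 1) * (T ^ 2 - T + 1) * (T ^ 3 - T ^ 2 + 2 • T - 1) = 0 := by
  rw [pow_two, pow_succ, pow_two, two_smul, hT]
  simp only [sub_eq_add_neg, Matrix.mul_add, Matrix.add_mul, Matrix.mul_neg, Matrix.neg_mul,
    Matrix.mul_one, Matrix.one_mul]
  simp only [fromBlocks_multiply, fromBlocks_mul_fromRows, fromCols_mul_fromBlocks,
    fromCols_mul_fromRows, mul_fromCols, fromRows_mul, fromBlocks_neg, fromRows_neg, fromCols_neg,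
    fromBlocks_add, fromCols_zero, fromCols_fromRows_eq_fromBlocks, Matrix.mul_add, Matrix.add_mul,
    Matrix.mul_neg, Matrix.neg_mul, Matrix.mul_assoc, Matrix.mul_zero, Matrix.zero_mul,
    Matrix.mul_one, Matrix.one_mul, add_zero, zero_add, neg_zero, hYX, hWZ,
    mul_mul_cancel_of_mul_eq_neg_one hYX, mul_mul_cancel_of_mul_eq_neg_one hWZ]
  ext ((i|i)|i) ((j|j)|j) <;> simp [fromBlocks, Matrix.one_apply] <;> abel

end Ring

variable [CommRing R] [Fintype m₁] [Fintype m₂] [Fintype m₃]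
  [DecidableEq m₁] [DecidableEq m₂] [DecidableEq m₃]

theorem inv_fromBlocks_diag_mul_fromBlocks_saddle {A : Matrix m₁ m₁ R} {S : Matrix m₂ m₂ R}
    {U : Matrix m₃ m₃ R} (hA : IsUnit A) (hS : IsUnit S) (hU : IsUnit U)
    (B : Matrix m₁ m₂ R) (C : Matrix m₂ m₁ R) (E : Matrix m₂ m₃ R) (F : Matrix m₃ m₂ R) :
    (fromBlocks (fromBlocks A 0 0 S) 0 0 U)⁻¹ *
        fromBlocks (fromBlocks A B C 0) (fromRows 0 E) (fromCols 0 F) 0 =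
      fromBlocks (fromBlocks 1 (A⁻¹ * B) (S⁻¹ * C) 0) (fromRows 0 (S⁻¹ * E))
        (fromCols 0 (U⁻¹ * F)) 0 := by
  have hAS : IsUnit (fromBlocks A 0 0 S) := isUnit_fromBlocks_zero₂₁.mpr ⟨hA, hS⟩
  rw [inv_fromBlocks_zero₂₁_of_isUnit_iff _ _ _ (iff_of_true hAS hU),
    inv_fromBlocks_zero₂₁_of_isUnit_iff _ _ _ (iff_of_true hA hS)]
  simp [fromBlocks_multiply, fromBlocks_mul_fromRows, mul_fromCols,
    nonsing_inv_mul _ ((isUnit_iff_isUnit_det A).mp hA)]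

end Matrix

theorem stmt_6 {n₁ n₂ n₃ : ℕ}
    (A₁ : Matrix (Fin n₁) (Fin n₁) ℝ)
    (B₁ C₁ : Matrix (Fin n₂) (Fin n₁) ℝ) (B₂ C₂ : Matrix (Fin n₃) (Fin n₂) ℝ)
    (hA₁ : IsUnit A₁)
    (S₂ : Matrix (Fin n₂) (Fin n₂) ℝ) (hS₂def : S₂ = C₁ * A₁⁻¹ * B₁ᵀ)
    (hS₂ : IsUnit S₂)
    (S₃ : Matrix (Fin n₃) (Fin n₃) ℝ) (hS₃def : S₃ = C₂ * S₂⁻¹ * B₂ᵀ)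
    (hS₃ : IsUnit S₃)
    (𝒜 : Matrix ((Fin n₁ ⊕ Fin n₂) ⊕ Fin n₃) ((Fin n₁ ⊕ Fin n₂) ⊕ Fin n₃) ℝ)
    (h𝒜 : 𝒜 = fromBlocks (fromBlocks A₁ B₁ᵀ C₁ 0) (fromRows 0 B₂ᵀ)
      (fromCols 0 C₂) 0)
    (T : Matrix ((Fin n₁ ⊕ Fin n₂) ⊕ Fin n₃) ((Fin n₁ ⊕ Fin n₂) ⊕ Fin n₃) ℝ)
    (hT : T = (fromBlocks (fromBlocks A₁ 0 0 (-S₂)) 0 0 S₃)⁻¹ * 𝒜) :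
    (T - 1) * (T ^ 2 - T + 1) * (T ^ 3 - T ^ 2 + 2 • T - 1) = 0 := by
  have hS₂inv : S₂⁻¹ * S₂ = 1 := nonsing_inv_mul _ ((isUnit_iff_isUnit_det S₂).mp hS₂)
  have hS₃inv : S₃⁻¹ * S₃ = 1 := nonsing_inv_mul _ ((isUnit_iff_isUnit_det S₃).mp hS₃)
  have hneg : (-S₂)⁻¹ = -S₂⁻¹ := inv_eq_left_inv (by rw [neg_mul_neg, hS₂inv])
  rw [h𝒜, inv_fromBlocks_diag_mul_fromBlocks_saddle hA₁ hS₂.neg hS₃, hneg] at hT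
  refine sextic_annihilates_fromBlocks_of_mul_eq_neg_one _ _ _ _ ?_ ?_ T hT
  · calc -S₂⁻¹ * C₁ * (A₁⁻¹ * B₁ᵀ) = -(S₂⁻¹ * S₂) := by simp [hS₂def, Matrix.mul_assoc]
      _ = -1 := by rw [hS₂inv]
  · calc S₃⁻¹ * C₂ * (-S₂⁻¹ * B₂ᵀ) = -(S₃⁻¹ * S₃) := by simp [hS₃def, Matrix.mul_assoc]
      _ = -1 := by rw [hS₃inv]
end

section
/- Define p̄₀(λ) = 1, p̄₁(λ) = λ - 1, p̄_{i+1}(λ) = λ p̄_i(λ) + p̄_{i-1}(λ) for i ≥ 1. Then for every n ≥ 1, every complex root of p̄_n has strictly positive real part. -/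
open Polynomial

theorem stmt_9 (p : ℕ → Polynomial ℝ)
    (h0 : p 0 = 1) (h1 : p 1 = X - 1)
    (hrec : ∀ i : ℕ, 1 ≤ i → p (i + 1) = X * p i + p (i - 1)) :
    ∀ n : ℕ, 1 ≤ n → ∀ z : ℂ, Polynomial.aeval z (p n) = 0 → 0 < z.re := by
  intro n hn z hz
  by_contra hre
  push_neg at hre
  set q : ℕ → ℂ := fun i => Polynomial.aeval z (p i) with hq
  have key : ∀ i : ℕ, q i ≠ 0 ∧ (q (i + 1) / q i).re < 0 := by
    intro i
    induction i with
    | zero =>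
      have e0 : q 0 = 1 := by simp [hq, h0]
      have e1 : q 1 = z - 1 := by simp [hq, h1]
      constructor
      · rw [e0]; exact one_ne_zero
      · rw [e0, e1]
        simp [Complex.sub_re]
        linarith
    | succ i ih =>
      obtain ⟨hqi, hr⟩ := ih
      have hqi1 : q (i + 1) ≠ 0 := by
        intro h
        rw [h] at hr
        simp at hr
      refine ⟨hqi1, ?_⟩
      have erec : q (i + 2) = z * q (i + 1) + q i := by
        have := hrec (i + 1) (by omega)
        simp [hq, this, map_add, map_mul]
      have hdiv : q (i + 2) / q (i + 1) = z + (q (i + 1) / q i)⁻¹ := by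
        rw [erec]
        field_simp
      rw [hdiv]
      have hinv : ((q (i + 1) / q i)⁻¹).re < 0 := by
        rw [Complex.inv_re]

        apply div_neg_of_neg_of_pos hr
        apply Complex.normSq_pos.mpr
        exact div_ne_zero hqi1 hqi
      rw [Complex.add_re]
      linarith
  obtain ⟨hqn, _⟩ := key n
  exact hqn hz
end

section
/- Let A be an invertible n×n matrix, and let the 2×2 block matrix 𝒜 = [[A, Bᵀ],[C, -A₂]] with Schur complement S = A₂ + C A⁻¹ Bᵀ invertible. For the block lower-triangular preconditioner 𝒬₁ = [[A, 0],[C, -S]], the preconditioned matrix 𝒬₁⁻¹𝒜 equals [[I, A⁻¹Bᵀ],[0, I]] and satisfies (𝒬₁⁻¹𝒜 - I)² = 0. -/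
open Matrix

theorem stmt_11 {K : Type*} [Field K] {n m : ℕ}
    (A : Matrix (Fin n) (Fin n) K) (A₂ : Matrix (Fin m) (Fin m) K)
    (B C : Matrix (Fin m) (Fin n) K)
    (hA : IsUnit A)
    (S : Matrix (Fin m) (Fin m) K) (hSdef : S = A₂ + C * A⁻¹ * Bᵀ)
    (hS : IsUnit S)
    (𝒜 Q : Matrix (Fin n ⊕ Fin m) (Fin n ⊕ Fin m) K)
    (h𝒜 : 𝒜 = fromBlocks A Bᵀ C (-A₂))
    (hQ : Q = fromBlocks A 0 C (-S)) :
    Q⁻¹ * 𝒜 = fromBlocks 1 (A⁻¹ * Bᵀ) 0 1 ∧ (Q⁻¹ * 𝒜 - 1) ^ 2 = 0 := by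
  have hAi : Invertible A := hA.invertible
  have hSi : Invertible S := hS.invertible
  have hSn : Invertible (-S) := invertibleNeg S
  have hQi : Invertible Q := by
    rw [hQ]; exact Matrix.fromBlocksZero₁₂Invertible A C (-S)
  have key : Q * fromBlocks 1 (A⁻¹ * Bᵀ) 0 1 = 𝒜 := by
    have hAA : A * (A⁻¹ * Bᵀ) = Bᵀ := by
      rw [← Matrix.mul_assoc, Matrix.mul_nonsing_inv A ((isUnit_iff_isUnit_det A).mp hA),
        Matrix.one_mul]
    have h22 : C * (A⁻¹ * Bᵀ) + -S = -A₂ := by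
      rw [hSdef, Matrix.mul_assoc]; abel
    rw [hQ, h𝒜, fromBlocks_multiply]
    simp only [Matrix.mul_one, Matrix.mul_zero, Matrix.zero_mul, Matrix.one_mul, add_zero,
      zero_add, hAA, h22]
  have hmain : Q⁻¹ * 𝒜 = fromBlocks 1 (A⁻¹ * Bᵀ) 0 1 := by
    rw [← key, ← Matrix.mul_assoc, Matrix.nonsing_inv_mul Q ((isUnit_iff_isUnit_det Q).mp (isUnit_of_invertible Q)), Matrix.one_mul]
  refine ⟨hmain, ?_⟩
  rw [hmain]
  have : fromBlocks (1 : Matrix (Fin n) (Fin n) K) (A⁻¹ * Bᵀ) 0 (1 : Matrix (Fin m) (Fin m) K) - 1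
      = fromBlocks 0 (A⁻¹ * Bᵀ) 0 0 := by
    rw [← fromBlocks_one]
    ext (i|i) (j|j) <;> simp [fromBlocks]
  rw [this, sq, fromBlocks_multiply]
  simp
end

section
/- Let A be invertible, A₂ = 0, and 𝒜 = [[A, Bᵀ],[C, 0]] with Schur complement S = CA⁻¹Bᵀ invertible. For the block-diagonal preconditioner 𝒬_D = diag(A, S), the matrix 𝒯 = 𝒬_D⁻¹𝒜 = [[I, A⁻¹Bᵀ],[S⁻¹C, 0]] satisfies (𝒯(𝒯 - I))² = 𝒯(𝒯 - I), i.e., 𝒯 satisfies the polynomial λ(λ-1)(λ²-λ-1) = 0. -/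
open Matrix

theorem stmt_12 {K : Type*} [Field K] {n m : ℕ}
    (A : Matrix (Fin n) (Fin n) K) (B C : Matrix (Fin m) (Fin n) K)
    (hA : IsUnit A)
    (S : Matrix (Fin m) (Fin m) K) (hSdef : S = C * A⁻¹ * Bᵀ)
    (hS : IsUnit S)
    (𝒜 T : Matrix (Fin n ⊕ Fin m) (Fin n ⊕ Fin m) K)
    (h𝒜 : 𝒜 = fromBlocks A Bᵀ C 0)
    (hT : T = (fromBlocks A 0 0 S)⁻¹ * 𝒜) :
    T = fromBlocks 1 (A⁻¹ * Bᵀ) (S⁻¹ * C) 0 ∧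
    (T * (T - 1)) ^ 2 = T * (T - 1) := by
  have hAd : IsUnit A.det := (Matrix.isUnit_iff_isUnit_det A).mp hA
  have hSd : IsUnit S.det := (Matrix.isUnit_iff_isUnit_det S).mp hS
  have hAi : A⁻¹ * A = 1 := Matrix.nonsing_inv_mul A hAd
  have hSi : S⁻¹ * S = 1 := Matrix.nonsing_inv_mul S hSd
  have h1 : (fromBlocks A 0 0 S)⁻¹ = fromBlocks A⁻¹ 0 0 S⁻¹ := by
    apply Matrix.inv_eq_left_inv
    simp [Matrix.fromBlocks_multiply, hAi, hSi]
  set P := A⁻¹ * Bᵀ with hP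
  set Q := S⁻¹ * C with hQ
  have hQP : Q * P = 1 := by
    rw [hQ, hP, Matrix.mul_assoc, ← Matrix.mul_assoc C, ← hSdef, hSi]
  have hTeq : T = fromBlocks 1 P Q 0 := by
    rw [hT, h𝒜, h1, Matrix.fromBlocks_multiply]
    simp [hAi, hP, hQ, Matrix.mul_assoc]
  refine ⟨hTeq, ?_⟩
  have hsub : T - 1 = fromBlocks 0 P Q (-1) := by
    rw [hTeq, ← Matrix.fromBlocks_one, sub_eq_add_neg, Matrix.fromBlocks_neg,
      Matrix.fromBlocks_add]
    simp
  have hM : T * (T - 1) = fromBlocks (P * Q) 0 0 1 := by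
    rw [hsub, hTeq, Matrix.fromBlocks_multiply]
    simp [hQP]
  rw [hM, sq, Matrix.fromBlocks_multiply]
  have h2 : P * Q * (P * Q) = P * Q := by
    rw [Matrix.mul_assoc P Q, ← Matrix.mul_assoc Q P, hQP, Matrix.one_mul]
  simp [h2]
end

section
/- Let A be invertible, A₂ = 0, 𝒜 = [[A, Bᵀ],[C, 0]], S = CA⁻¹Bᵀ invertible. For 𝒬_{D₂} = diag(A, -S), the matrix 𝒯 = 𝒬_{D₂}⁻¹𝒜 = [[I, A⁻¹Bᵀ],[-S⁻¹C, 0]] satisfies (𝒯(𝒯-I))² = -𝒯(𝒯-I), i.e., 𝒯 satisfies λ(λ-1)(λ²-λ+1) = 0. Consequently every eigenvalue of 𝒯 other than possibly 0 lies in the set {1, (1+i√3)/2, (1-i√3)/2}. -/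
open Matrix

theorem stmt_13 {n m : ℕ}
    (A : Matrix (Fin n) (Fin n) ℂ) (B C : Matrix (Fin m) (Fin n) ℂ)
    (hA : IsUnit A)
    (S : Matrix (Fin m) (Fin m) ℂ) (hSdef : S = C * A⁻¹ * Bᵀ)
    (hS : IsUnit S)
    (𝒜 T : Matrix (Fin n ⊕ Fin m) (Fin n ⊕ Fin m) ℂ)
    (h𝒜 : 𝒜 = fromBlocks A Bᵀ C 0)
    (hT : T = (fromBlocks A 0 0 (-S))⁻¹ * 𝒜) :
    T = fromBlocks 1 (A⁻¹ * Bᵀ) (-(S⁻¹ * C)) 0 ∧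
    (T * (T - 1)) ^ 2 = -(T * (T - 1)) ∧
    ∀ μ ∈ spectrum ℂ T, μ ≠ 0 →
      μ = 1 ∨ μ = (1 + Complex.I * Real.sqrt 3) / 2 ∨
        μ = (1 - Complex.I * Real.sqrt 3) / 2 := by
  have hAd : IsUnit A.det := A.isUnit_iff_isUnit_det.mp hA
  have hSd : IsUnit S.det := S.isUnit_iff_isUnit_det.mp hS
  have hQinv : (fromBlocks A 0 0 (-S) : Matrix (Fin n ⊕ Fin m) (Fin n ⊕ Fin m) ℂ)⁻¹
      = fromBlocks A⁻¹ 0 0 (-S)⁻¹ := by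
    rw [Matrix.inv_fromBlocks_zero₁₂_of_isUnit_iff A 0 (-S) (by simp [hA, hS.neg])]
    simp
  have hnegS : (-S)⁻¹ = -(S⁻¹) := Matrix.inv_eq_right_inv (by
    rw [neg_mul_neg, Matrix.mul_nonsing_inv S hSd])
  have hT1 : T = fromBlocks 1 (A⁻¹ * Bᵀ) (-(S⁻¹ * C)) 0 := by
    rw [hT, hQinv, h𝒜, fromBlocks_multiply]
    simp [hnegS, Matrix.nonsing_inv_mul A hAd]
  set P := A⁻¹ * Bᵀ with hP
  set Q := S⁻¹ * C with hQ
  have hQP : Q * P = 1 := by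
    have h := Matrix.nonsing_inv_mul S hSd
    nth_rewrite 2 [hSdef] at h
    simp only [Matrix.mul_assoc] at h
    simp only [hQ, hP, Matrix.mul_assoc]
    exact h
  have hsub : (fromBlocks 1 P (-Q) 0 : Matrix (Fin n ⊕ Fin m) (Fin n ⊕ Fin m) ℂ) - 1
      = fromBlocks 0 P (-Q) (-1) := by
    rw [← fromBlocks_one, sub_eq_add_neg, fromBlocks_neg, fromBlocks_add]
    simp
  have hM : T * (T - 1) = fromBlocks (-(P * Q)) 0 0 (-1) := by
    rw [hT1, hsub, fromBlocks_multiply]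
    simp [hQP, Matrix.mul_neg, Matrix.neg_mul]
  have hM2 : (T * (T - 1)) ^ 2 = -(T * (T - 1)) := by
    rw [hM, pow_two, fromBlocks_multiply]
    have : -(P * Q) * -(P * Q) = P * Q := by
      rw [neg_mul_neg, Matrix.mul_assoc, ← Matrix.mul_assoc Q, hQP, Matrix.one_mul]
    rw [this]
    simp [fromBlocks_neg]
  refine ⟨hT1, hM2, ?_⟩
  intro μ hμ hμ0
  have hpT : (Polynomial.aeval T) ((Polynomial.X * (Polynomial.X - 1)) ^ 2
      + Polynomial.X * (Polynomial.X - 1) : Polynomial ℂ) = 0 := by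
    simp only [map_add, map_pow, _root_.map_mul, map_sub, _root_.map_one, Polynomial.aeval_X,
      Polynomial.aeval_one]
    rw [hM2, neg_add_cancel]
  have hmem := spectrum.subset_polynomial_aeval T
      ((Polynomial.X * (Polynomial.X - 1)) ^ 2 + Polynomial.X * (Polynomial.X - 1))
      ⟨μ, hμ, rfl⟩
  rw [hpT] at hmem
  simp only [Polynomial.eval_add, Polynomial.eval_pow, Polynomial.eval_mul,
    Polynomial.eval_sub, Polynomial.eval_one, Polynomial.eval_X] at hmem
  have hval : (μ * (μ - 1)) ^ 2 + μ * (μ - 1) = 0 := by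
    by_contra h
    refine spectrum.mem_iff.mp hmem ?_
    rw [sub_zero]
    exact (isUnit_iff_ne_zero.mpr h).map
      (algebraMap ℂ (Matrix (Fin n ⊕ Fin m) (Fin n ⊕ Fin m) ℂ))
  have hs : ((Real.sqrt 3 : ℝ) : ℂ) ^ 2 = 3 := by
    norm_cast
    rw [Real.sq_sqrt] <;> norm_num
  have hfac : μ * ((μ - 1) * ((μ - (1 + Complex.I * Real.sqrt 3) / 2)
      * (μ - (1 - Complex.I * Real.sqrt 3) / 2))) = 0 := by
    linear_combination hval - μ * (μ - 1) * ((Real.sqrt 3 : ℝ) : ℂ) ^ 2 / 4 * Complex.I_sq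
      + μ * (μ - 1) / 4 * hs
  rcases mul_eq_zero.mp hfac with h | h
  · exact absurd h hμ0
  rcases mul_eq_zero.mp h with h | h
  · exact Or.inl (sub_eq_zero.mp h)
  rcases mul_eq_zero.mp h with h | h
  · exact Or.inr (Or.inl (sub_eq_zero.mp h))
  · exact Or.inr (Or.inr (sub_eq_zero.mp h))
end

section
/- For 𝒜 = [[A, Bᵀ],[C, -A₂]] with A invertible and S = A₂ + CA⁻¹Bᵀ invertible, the preconditioner 𝒬₂ = [[A, 0],[C, S]] yields 𝒬₂⁻¹𝒜 = [[I, A⁻¹Bᵀ],[0, -I]], which satisfies (λ-1)(λ+1) = 0, i.e., (𝒬₂⁻¹𝒜)² = I. -/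
open Matrix

theorem stmt_14 {K : Type*} [Field K] {n m : ℕ}
    (A : Matrix (Fin n) (Fin n) K) (A₂ : Matrix (Fin m) (Fin m) K)
    (B C : Matrix (Fin m) (Fin n) K)
    (hA : IsUnit A)
    (S : Matrix (Fin m) (Fin m) K) (hSdef : S = A₂ + C * A⁻¹ * Bᵀ)
    (hS : IsUnit S)
    (𝒜 Q : Matrix (Fin n ⊕ Fin m) (Fin n ⊕ Fin m) K)
    (h𝒜 : 𝒜 = fromBlocks A Bᵀ C (-A₂))
    (hQ : Q = fromBlocks A 0 C S) :
    Q⁻¹ * 𝒜 = fromBlocks 1 (A⁻¹ * Bᵀ) 0 (-1) ∧ (Q⁻¹ * 𝒜) ^ 2 = 1 := by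
  have hQi : Q⁻¹ = fromBlocks A⁻¹ 0 (-(S⁻¹ * C * A⁻¹)) S⁻¹ := by
    rw [hQ, inv_fromBlocks_zero₁₂_of_isUnit_iff _ _ _ (iff_of_true hA hS)]
  have h1 : Q⁻¹ * 𝒜 = fromBlocks 1 (A⁻¹ * Bᵀ) 0 (-1) := by
    rw [hQi, h𝒜, fromBlocks_multiply]
    rw [fromBlocks_inj]
    refine ⟨?_, ?_, ?_, ?_⟩
    · rw [Matrix.zero_mul, add_zero, nonsing_inv_mul A (isUnit_iff_isUnit_det A |>.mp hA)]
    · simp [Matrix.mul_assoc]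
    · rw [Matrix.neg_mul, Matrix.mul_assoc, nonsing_inv_mul A (isUnit_iff_isUnit_det A |>.mp hA), Matrix.mul_one,
        neg_add_cancel]
    · simp only [Matrix.neg_mul, ← neg_add, Matrix.mul_assoc, ← Matrix.mul_add]
      rw [add_comm, Matrix.mul_neg, ← neg_add, ← Matrix.mul_add, ← Matrix.mul_assoc C, ← hSdef,
        nonsing_inv_mul S (isUnit_iff_isUnit_det S |>.mp hS)]
  refine ⟨h1, ?_⟩
  rw [h1, pow_two, fromBlocks_multiply]
  simp [← fromBlocks_one]
end

section
/- For μ > 0, λ > 0 and any (k, l) ≠ (0,0), the scalar Schur complement 1/λ + [−ik, −il] · M⁻¹ · [ik, il]ᵀ, where M = [[2μk² + μl², μkl],[μkl, 2μl² + μk²]], equals 1/λ + 1/(2μ), independent of k and l. -/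
/-! `(k, l)` is an eigenvector of `M = μ ((k² + l²) I + (k, l)(k, l)ᵀ)` with eigenvalue
`2μ (k² + l²)`, so `M⁻¹ (k, l) = (k, l) / (2μ (k² + l²))` and the quadratic form
`(k, l) M⁻¹ (k, l)ᵀ` equals `1 / (2μ)`. The factors `-i` and `i` multiply to `1`. -/

open Matrix

theorem Matrix.inv_mulVec_of_mulVec_eq_smul {n K : Type*} [Fintype n] [DecidableEq n] [Field K]
    {A : Matrix n n K} (hA : IsUnit A.det) {c : K} (hc : c ≠ 0) {v : n → K}
    (hv : A *ᵥ v = c • v) : A⁻¹ *ᵥ v = c⁻¹ • v := by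
  have h := congrArg (A⁻¹ *ᵥ ·) hv
  simp only [mulVec_mulVec, nonsing_inv_mul A hA, one_mulVec, mulVec_smul] at h
  rw [eq_inv_smul_iff₀ hc]
  exact h.symm

section SymbolMatrix

variable {K : Type*} [Field K]

def symbolMatrix (μ k l : K) : Matrix (Fin 2) (Fin 2) K :=
  !![2 * μ * k ^ 2 + μ * l ^ 2, μ * k * l; μ * k * l, 2 * μ * l ^ 2 + μ * k ^ 2]

theorem symbolMatrix_mulVec_self (μ k l : K) :
    symbolMatrix μ k l *ᵥ ![k, l] = (2 * μ * (k ^ 2 + l ^ 2)) • ![k, l] := by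
  ext i; fin_cases i <;> simp [symbolMatrix] <;> ring

theorem det_symbolMatrix (μ k l : K) :
    (symbolMatrix μ k l).det = 2 * μ ^ 2 * (k ^ 2 + l ^ 2) ^ 2 := by
  rw [symbolMatrix, det_fin_two_of]; ring

theorem dotProduct_symbolMatrix_inv_mulVec_self {μ k l : K} (h2 : (2 : K) ≠ 0) (hμ : μ ≠ 0)
    (hkl : k ^ 2 + l ^ 2 ≠ 0) :
    ![k, l] ⬝ᵥ ((symbolMatrix μ k l)⁻¹ *ᵥ ![k, l]) = 1 / (2 * μ) := by
  have hdet : IsUnit (symbolMatrix μ k l).det := by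
    rw [det_symbolMatrix, isUnit_iff_ne_zero]; positivity
  rw [inv_mulVec_of_mulVec_eq_smul hdet (by positivity) (symbolMatrix_mulVec_self μ k l),
    dotProduct_smul]
  simp [dotProduct, Fin.sum_univ_two]
  field_simp

end SymbolMatrix

theorem stmt_19_general (μ lam k l : ℝ) (hμ : 0 < μ)
    (hkl : (k, l) ≠ (0, 0)) :
    1 / (lam : ℂ) +
      ![-(Complex.I * k), -(Complex.I * l)] ⬝ᵥ
        (((!![2 * μ * k ^ 2 + μ * l ^ 2, μ * k * l;
              μ * k * l, 2 * μ * l ^ 2 + μ * k ^ 2]).map (Complex.ofReal))⁻¹ *ᵥ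
          ![Complex.I * k, Complex.I * l]) =
      1 / (lam : ℂ) + 1 / (2 * (μ : ℂ)) := by
  have hmap : (!![2 * μ * k ^ 2 + μ * l ^ 2, μ * k * l;
      μ * k * l, 2 * μ * l ^ 2 + μ * k ^ 2]).map (Complex.ofReal) = symbolMatrix (μ : ℂ) k l := by
    ext i j; fin_cases i <;> fin_cases j <;> simp [symbolMatrix]
  have hkl' : (k : ℂ) ^ 2 + (l : ℂ) ^ 2 ≠ 0 := by
    have : k ^ 2 + l ^ 2 ≠ 0 := by
      rw [sq, sq, Ne, mul_self_add_mul_self_eq_zero]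
      simpa [Prod.ext_iff] using hkl
    exact_mod_cast this
  have hI : ![Complex.I * k, Complex.I * l] = Complex.I • ![(k : ℂ), l] := by simp
  have hnegI : ![-(Complex.I * k), -(Complex.I * l)] = -(Complex.I • ![(k : ℂ), l]) := by simp
  rw [hmap, hI, hnegI, mulVec_smul, neg_dotProduct, smul_dotProduct, dotProduct_smul,
    dotProduct_symbolMatrix_inv_mulVec_self two_ne_zero (by exact_mod_cast hμ.ne') hkl']
  simp only [smul_eq_mul, ← mul_assoc, Complex.I_mul_I]
  ring

theorem stmt_19 (μ lam k l : ℝ) (hμ : 0 < μ) (hlam : 0 < lam)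
    (hkl : (k, l) ≠ (0, 0)) :
    1 / (lam : ℂ) +
      ![-(Complex.I * k), -(Complex.I * l)] ⬝ᵥ
        (((!![2 * μ * k ^ 2 + μ * l ^ 2, μ * k * l;
              μ * k * l, 2 * μ * l ^ 2 + μ * k ^ 2]).map (Complex.ofReal))⁻¹ *ᵥ
          ![Complex.I * k, Complex.I * l]) =
      1 / (lam : ℂ) + 1 / (2 * (μ : ℂ)) :=
  stmt_19_general μ lam k l hμ hkl
end
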